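/- arXiv:2412.09948 — 2 statements merged into one kernel-verified Lean document; each statement's English description precedes it below -/
import Mathlib

section
/- Consider a finite set S of EVs at a single charging point that is free at time 0, where EV i has charging duration T_i > 0 and charge requirement ψ_i ≥ 0, EVs are served one at a time, the waiting time of an EV is the sum of the charging durations of all EVs served strictly before it, and a schedule is SLA-compliant for bound γ if every served EV's waiting time is at most γ. The maximum, over all subsets S' ⊆ S and all orders of service of S' that are SLA-compliant for bound γ, of the total delivered charge Σ_{i∈S'} ψ_i, equals the maximum of Σ_{i∈S'} ψ_i over all subsets S' ⊆ S that are empty or satisfy Σ_{i∈S'} T_i − max_{i∈S'} T_i ≤ γ. -/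
/-- For a finite set `S` of EVs with positive charging durations `T i` and
nonnegative charge requirements `ψ i`, the maximum, over all subsets
`S' ⊆ S` and all orders of service of `S'` (duplicate-free lists with element
set `S'`) that are SLA-compliant for bound `γ` (every served EV's waiting
time, the sum of durations served strictly before it, is at most `γ`), of the
total delivered charge `∑ i in S', ψ i`, equals the maximum of
`∑ i in S', ψ i` over all subsets `S' ⊆ S` that are empty or satisfy
`∑ i in S', T i − max_{i∈S'} T i ≤ γ`. -/
theorem max_sla_schedule_charge_eq {ι : Type*} [DecidableEq ι]
    (S : Finset ι) (T ψ : ι → ℝ)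
    (hT : ∀ i ∈ S, 0 < T i) (hψ : ∀ i ∈ S, 0 ≤ ψ i) (γ : ℝ) :
    sSup {x : ℝ | ∃ l : List ι, l.Nodup ∧ l.toFinset ⊆ S ∧
        (∀ k < l.length, ((l.take k).map T).sum ≤ γ) ∧
        x = ((l.map ψ).sum)} =
    sSup {x : ℝ | ∃ S' : Finset ι, S' ⊆ S ∧
        (S' = ∅ ∨ ∃ hS' : S'.Nonempty, (∑ i ∈ S', T i) - S'.sup' hS' T ≤ γ) ∧
        x = ∑ i ∈ S', ψ i} := by
  congr 1
  ext x
  constructor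
  · rintro ⟨l, hnd, hsub, hsla, rfl⟩
    refine ⟨l.toFinset, hsub, ?_, (List.sum_toFinset ψ hnd).symm ▸ rfl⟩
    rcases List.eq_nil_or_concat l with rfl | ⟨L, m, rfl⟩
    · exact Or.inl (by simp)
    · simp only [List.concat_eq_append] at hnd hsub hsla ⊢
      have hm : m ∈ (L ++ [m]).toFinset := by simp
      have hne : ((L ++ [m]).toFinset).Nonempty := ⟨m, hm⟩
      refine Or.inr ⟨hne, ?_⟩
      have hsum : ∑ i ∈ (L ++ [m]).toFinset, T i = (L.map T).sum + T m := by
        rw [List.sum_toFinset T hnd]; simp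
      have hle : T m ≤ ((L ++ [m]).toFinset).sup' hne T := Finset.le_sup' T hm
      have hγ : (L.map T).sum ≤ γ := by
        have := hsla L.length (by simp)
        rwa [List.take_left] at this
      rw [hsum]; linarith
  · rintro ⟨S', hsub, hcond, rfl⟩
    rcases hcond with rfl | ⟨hne, hγ⟩
    · exact ⟨[], by simp, by simp, by simp, by simp⟩
    · obtain ⟨m, hm, hsup⟩ := Finset.exists_mem_eq_sup' hne T
      set L := (S'.erase m).toList with hL
      refine ⟨L ++ [m], ?_, ?_, ?_, ?_⟩
      · rw [List.nodup_append]
        exact ⟨Finset.nodup_toList _, List.nodup_singleton m,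
          by simp [hL, Finset.mem_toList]; tauto⟩
      · intro i hi
        simp only [List.toFinset_append, Finset.mem_union, List.mem_toFinset,
          hL, Finset.mem_toList, List.toFinset_cons, List.toFinset_nil] at hi
        rcases hi with hi | hi
        · exact hsub (Finset.erase_subset m S' hi)
        · simp at hi; exact hsub (hi ▸ hm)
      · intro k hk
        have hklen : k ≤ L.length := by
          simp only [List.length_append, List.length_singleton] at hk; omega
        rw [List.take_append_of_le_length hklen]
        have h1 : ((L.take k).map T).sum ≤ (L.map T).sum := by
          have hsl : List.Sublist ((L.take k).map T) (L.map T) :=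
            (List.take_sublist k L).map T
          refine List.Sublist.sum_le_sum hsl ?_
          intro a ha
          obtain ⟨i, hi, rfl⟩ := List.mem_map.mp ha
          have : i ∈ S' := Finset.erase_subset m S' (by rwa [← Finset.mem_toList])
          exact (hT i (hsub this)).le
        have h2 : (L.map T).sum = ∑ i ∈ S', T i - T m := by
          rw [hL, Finset.sum_map_toList]
          rw [Finset.sum_erase_eq_sub hm]
        rw [h2, ← hsup] at h1
        exact h1.trans hγ
      · rw [List.map_append, List.sum_append, hL]
        rw [show List.map ψ (S'.erase m).toList = (S'.erase m).toList.map ψ from rfl]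
        rw [Finset.sum_map_toList, Finset.sum_erase_eq_sub hm]
        simp
end

section
/- Consider a finite set S of EVs at a single charging point that is free at time 0, where EV i has charging duration T_i > 0 and charge requirement ψ_i ≥ 0, EVs are served one at a time, the waiting time of an EV is the sum of the charging durations of all EVs served strictly before it, and a schedule is SLA-compliant for bound γ if every served EV's waiting time is at most γ. Then the maximum total delivered charge over all subsets S' ⊆ S and SLA-compliant orders of service of S' is at least the optimum of the 0/1 knapsack instance with item set S, item weights T_i, item values ψ_i, and knapsack capacity γ (i.e., at least max{Σ_{i∈S'} ψ_i : S' ⊆ S, Σ_{i∈S'} T_i ≤ γ}). -/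
/-- For a finite set `S` of EVs with positive charging durations `T i` and
nonnegative charge requirements `ψ i`, the maximum total delivered charge over
all subsets `S' ⊆ S` and SLA-compliant (for bound `γ`) orders of service of
`S'` is at least the optimum of the 0/1 knapsack instance with item set `S`,
weights `T i`, values `ψ i`, and capacity `γ`, i.e., at least
`max { ∑ i in S', ψ i : S' ⊆ S, ∑ i in S', T i ≤ γ }`. -/
theorem max_sla_schedule_charge_ge_knapsack {ι : Type*} [DecidableEq ι]
    (S : Finset ι) (T ψ : ι → ℝ)
    (hT : ∀ i ∈ S, 0 < T i) (hψ : ∀ i ∈ S, 0 ≤ ψ i) (γ : ℝ) :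
    sSup {x : ℝ | ∃ S' : Finset ι, S' ⊆ S ∧ (∑ i ∈ S', T i) ≤ γ ∧
        x = ∑ i ∈ S', ψ i} ≤
    sSup {x : ℝ | ∃ l : List ι, l.Nodup ∧ l.toFinset ⊆ S ∧
        (∀ k < l.length, ((l.take k).map T).sum ≤ γ) ∧
        x = ((l.map ψ).sum)} := by
  set A := {x : ℝ | ∃ S' : Finset ι, S' ⊆ S ∧ (∑ i ∈ S', T i) ≤ γ ∧
      x = ∑ i ∈ S', ψ i} with hA
  set B := {x : ℝ | ∃ l : List ι, l.Nodup ∧ l.toFinset ⊆ S ∧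
      (∀ k < l.length, ((l.take k).map T).sum ≤ γ) ∧
      x = ((l.map ψ).sum)} with hB
  have hsub : A ⊆ B := by
    rintro x ⟨S', hS'S, hTsum, rfl⟩
    refine ⟨S'.toList, S'.nodup_toList, ?_, ?_, ?_⟩
    · intro i hi
      rw [List.mem_toFinset, Finset.mem_toList] at hi
      exact hS'S hi
    · intro k hk
      have h1 : ((S'.toList.take k).map T).sum + ((S'.toList.drop k).map T).sum
          = (S'.toList.map T).sum := by
        rw [← List.sum_append, ← List.map_append, List.take_append_drop]
      have h2 : (S'.toList.map T).sum = ∑ i ∈ S', T i := Finset.sum_map_toList S' T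
      have h3 : 0 ≤ ((S'.toList.drop k).map T).sum := by
        apply List.sum_nonneg
        intro x hx
        obtain ⟨i, hi, rfl⟩ := List.mem_map.mp hx
        have : i ∈ S' := Finset.mem_toList.mp (List.mem_of_mem_drop hi)
        exact (hT i (hS'S this)).le
      linarith
    · exact (Finset.sum_map_toList S' ψ).symm
  have hBdd : BddAbove B := by
    refine ⟨∑ i ∈ S, ψ i, ?_⟩
    rintro x ⟨l, hnd, hsub', _, rfl⟩
    have h1 : (l.map ψ).sum = ∑ i ∈ l.toFinset, ψ i :=
      (List.sum_toFinset ψ hnd).symm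
    rw [h1]
    exact Finset.sum_le_sum_of_subset_of_nonneg hsub' (fun i hi _ => hψ i hi)
  by_cases hAne : A.Nonempty
  · exact csSup_le_csSup hBdd hAne hsub
  · rw [Set.not_nonempty_iff_eq_empty.mp hAne, Real.sSup_empty]
    have h0 : (0 : ℝ) ∈ B := ⟨[], by simp⟩
    calc (0:ℝ) ≤ 0 := le_refl 0
      _ ≤ sSup B := le_csSup hBdd h0
end
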